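/- Let λ₂, λ₄ : U → ℝ with 1 + λᵢ(u) > 0 for all u. Define ℵ(u) = (ln(1 + min(λ₂(u),λ₄(u))) − min(λ₂(u),λ₄(u)))·1_{min(λ₂,λ₄)>0} + (ln(1 + max(λ₂(u),λ₄(u))) − max(λ₂(u),λ₄(u)))·1_{max(λ₂,λ₄)≤0}. Then for all ω₁, ω₂, I, D > 0 and all u, ln(1 + (ω₁λ₂(u)I + ω₂λ₄(u)D)/(ω₁ I + ω₂ D)) − (ω₁λ₂(u)I + ω₂λ₄(u)D)/(ω₁ I + ω₂ D) ≤ ℵ(u). -/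

import Mathlib

private lemma f_nonpos (c : ℝ) (hc : -1 < c) : Real.log (1 + c) - c ≤ 0 := by
  have h : Real.log (1 + c) ≤ (1 + c) - 1 :=
    Real.log_le_sub_one_of_pos (by linarith)
  linarith

private lemma f_diff (m c : ℝ) (hm : -1 < m) (hc : -1 < c) :
    Real.log (1 + c) - Real.log (1 + m) ≤ (c - m) / (1 + m) := by
  have hm' : (0:ℝ) < 1 + m := by linarith
  have hc' : (0:ℝ) < 1 + c := by linarith
  have h := Real.log_le_sub_one_of_pos (x := (1 + c) / (1 + m)) (by positivity)
  rw [Real.log_div (by positivity) (by positivity)] at h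
  have : (1 + c) / (1 + m) - 1 = (c - m) / (1 + m) := by field_simp; ring
  linarith [this ▸ h]

private lemma key1 (m c : ℝ) (hm0 : 0 ≤ m) (hmc : m ≤ c) :
    Real.log (1 + c) - c ≤ Real.log (1 + m) - m := by
  have hm : (-1:ℝ) < m := by linarith
  have hc : (-1:ℝ) < c := by linarith
  have h := f_diff m c hm hc
  have h2 : (c - m) / (1 + m) ≤ c - m := by
    rw [div_le_iff₀ (by linarith)]
    nlinarith
  linarith

private lemma key2 (M c : ℝ) (hc : -1 < c) (hcM : c ≤ M) (hM0 : M ≤ 0) :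
    Real.log (1 + c) - c ≤ Real.log (1 + M) - M := by
  have hM : (-1:ℝ) < M := by linarith
  have h := f_diff M c hM hc
  have h2 : (c - M) / (1 + M) ≤ c - M := by
    rw [div_le_iff₀ (by linarith)]
    nlinarith
  linarith

theorem aleph_bound {U : Type*} (lam₂ lam₄ : U → ℝ)
    (h₂ : ∀ u, -1 < lam₂ u) (h₄ : ∀ u, -1 < lam₄ u)
    (aleph : U → ℝ)
    (haleph : ∀ u, aleph u =
      (if 0 < min (lam₂ u) (lam₄ u) then
        Real.log (1 + min (lam₂ u) (lam₄ u)) - min (lam₂ u) (lam₄ u) else 0) +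
      (if max (lam₂ u) (lam₄ u) ≤ 0 then
        Real.log (1 + max (lam₂ u) (lam₄ u)) - max (lam₂ u) (lam₄ u) else 0)) :
    ∀ (ω₁ ω₂ I D : ℝ), 0 < ω₁ → 0 < ω₂ → 0 < I → 0 < D → ∀ u : U,
      Real.log (1 + (ω₁ * lam₂ u * I + ω₂ * lam₄ u * D) / (ω₁ * I + ω₂ * D))
        - (ω₁ * lam₂ u * I + ω₂ * lam₄ u * D) / (ω₁ * I + ω₂ * D) ≤ aleph u := by
  intro ω₁ ω₂ I D hω₁ hω₂ hI hD u
  set c := (ω₁ * lam₂ u * I + ω₂ * lam₄ u * D) / (ω₁ * I + ω₂ * D) with hcdef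
  set m := min (lam₂ u) (lam₄ u) with hmdef
  set M := max (lam₂ u) (lam₄ u) with hMdef
  have hs : (0:ℝ) < ω₁ * I + ω₂ * D := by positivity
  have hmM : m ≤ M := min_le_max
  have hm1 : -1 < m := lt_min (h₂ u) (h₄ u)
  have hmc : m ≤ c := by
    rw [hcdef, le_div_iff₀ hs]
    have h1 : m ≤ lam₂ u := min_le_left _ _
    have h2 : m ≤ lam₄ u := min_le_right _ _
    nlinarith [mul_le_mul_of_nonneg_left h1 (mul_pos hω₁ hI).le,
      mul_le_mul_of_nonneg_left h2 (mul_pos hω₂ hD).le]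
  have hcM : c ≤ M := by
    rw [hcdef, div_le_iff₀ hs]
    have h1 : lam₂ u ≤ M := le_max_left _ _
    have h2 : lam₄ u ≤ M := le_max_right _ _
    nlinarith [mul_le_mul_of_nonneg_left h1 (mul_pos hω₁ hI).le,
      mul_le_mul_of_nonneg_left h2 (mul_pos hω₂ hD).le]
  have hc1 : -1 < c := lt_of_lt_of_le hm1 hmc
  rw [haleph u]
  by_cases h1 : 0 < m
  · rw [if_pos h1, if_neg (by push_neg; linarith)]
    have := key1 m c h1.le hmc
    linarith
  · rw [if_neg h1]
    by_cases h2 : M ≤ 0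
    · rw [if_pos h2]
      have := key2 M c hc1 hcM h2
      linarith
    · rw [if_neg h2]
      simpa using f_nonpos c hc1
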